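/- arXiv:1504.03921 — 6 statements merged into one kernel-verified Lean document; each statement's English description precedes it below -/
import Mathlib

section
/- If α : [0, a] → M is a unit-speed geodesic segment satisfying b_γ(α(s)) = s + b_γ(α(0)) for all s ∈ [0, a], then α is an N-segment to the superlevel set N := b_γ^{-1}([b, ∞)) where b := b_γ(α(a)); that is, d(α(s), N) = a − s for all s ∈ [0, a]. -/
/-- If `α : [0, a] → M` is a unit-speed minimizing geodesic satisfying
`b_γ(α(s)) = s + b_γ(α(0))` for all `s ∈ [0, a]`, then `α` is an `N`-segment to the superlevel
set `N := b_γ⁻¹([b, ∞))` with `b := b_γ(α(a))`: that is, `d(α(s), N) = a − s` on `[0, a]`. -/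
theorem coray_subarc_is_superlevel_segment {M : Type*} (d : M → M → ℝ) (γ : ℝ → M) (b : M → ℝ)
    (hd_self : ∀ p, d p p = 0)
    (htri : ∀ p q r, d p r ≤ d p q + d q r)
    (hray : ∀ s t : ℝ, 0 ≤ s → s ≤ t → d (γ s) (γ t) = t - s)
    (hb : ∀ x, Filter.Tendsto (fun t => t - d x (γ t)) Filter.atTop (nhds (b x)))
    (hlip : ∀ x y : M, b x - b y ≤ d y x)
    (α : ℝ → M) (a : ℝ) (ha : 0 ≤ a)
    (hgeo : ∀ s t : ℝ, 0 ≤ s → s ≤ t → t ≤ a → d (α s) (α t) = t - s)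
    (hbus : ∀ s ∈ Set.Icc (0:ℝ) a, b (α s) = s + b (α 0)) :
    ∀ s ∈ Set.Icc (0:ℝ) a,
      sInf ((fun q => d (α s) q) '' {q : M | b (α a) ≤ b q}) = a - s := by
  intro s hs
  obtain ⟨hs0, hsa⟩ := hs
  have hmem : (a - s) ∈ ((fun q => d (α s) q) '' {q : M | b (α a) ≤ b q}) := by
    refine ⟨α a, show b (α a) ≤ b (α a) from le_rfl, ?_⟩
    exact hgeo s a hs0 hsa le_rfl
  have hlb : ∀ x ∈ ((fun q => d (α s) q) '' {q : M | b (α a) ≤ b q}), a - s ≤ x := by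
    rintro x ⟨q, hq, rfl⟩
    have h1 : b q - b (α s) ≤ d (α s) q := hlip q (α s)
    have h2 : b (α a) = a + b (α 0) := hbus a ⟨ha, le_rfl⟩
    have h3 : b (α s) = s + b (α 0) := hbus s ⟨hs0, hsa⟩
    have : a - s ≤ b q - b (α s) := by
      have : b (α a) - b (α s) = a - s := by rw [h2, h3]; ring
      have hq' : b (α a) ≤ b q := hq
      linarith
    linarith
  exact le_antisymm (csInf_le ⟨a - s, hlb⟩ hmem) (le_csInf ⟨_, hmem⟩ hlb)
end

section
/- If σ is a co-ray to γ, meaning b_γ(σ(s)) = s + b_γ(σ(0)) for all s ≥ 0 and σ is a unit-speed ray, then for any 0 ≤ s ≤ t, the restriction σ|_{[s, t]} is the unique minimizing geodesic realizing d(σ(s), N^b_γ) with b = b_γ(σ(t)); in particular d(σ(s), N^{b}_γ) = t − s. -/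
/-- If `σ` is a co-ray to `γ` (a unit-speed ray with
`b_γ(σ(s)) = s + b_γ(σ(0))` for all `s ≥ 0`), then for any `0 ≤ s ≤ t` the restriction
`σ|[s,t]` realizes the distance to `N^b_γ` with `b = b_γ(σ(t))`; in particular
`d(σ(s), N^b_γ) = t − s`. -/
theorem coray_realizes_dist_to_superlevel {M : Type*} (d : M → M → ℝ) (γ : ℝ → M) (b : M → ℝ)
    (hd_self : ∀ p, d p p = 0)
    (htri : ∀ p q r, d p r ≤ d p q + d q r)
    (hray : ∀ s t : ℝ, 0 ≤ s → s ≤ t → d (γ s) (γ t) = t - s)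
    (hb : ∀ x, Filter.Tendsto (fun t => t - d x (γ t)) Filter.atTop (nhds (b x)))
    (hlip : ∀ x y : M, b x - b y ≤ d y x)
    (σ : ℝ → M)
    (hσray : ∀ s t : ℝ, 0 ≤ s → s ≤ t → d (σ s) (σ t) = t - s)
    (hσbus : ∀ s : ℝ, 0 ≤ s → b (σ s) = s + b (σ 0)) :
    ∀ s t : ℝ, 0 ≤ s → s ≤ t →
      sInf ((fun q => d (σ s) q) '' {q : M | b (σ t) ≤ b q}) = t - s ∧
      d (σ s) (σ t) = t - s ∧ σ t ∈ {q : M | b (σ t) ≤ b q} := by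
  intro s t hs hst
  have hdst : d (σ s) (σ t) = t - s := hσray s t hs hst
  have hmem : σ t ∈ {q : M | b (σ t) ≤ b q} := Set.mem_setOf_eq ▸ le_refl _
  have hlow : ∀ x ∈ (fun q => d (σ s) q) '' {q : M | b (σ t) ≤ b q}, t - s ≤ x := by
    rintro x ⟨q, hq, rfl⟩
    have h1 : b q - b (σ s) ≤ d (σ s) q := hlip q (σ s)
    have h2 : b (σ t) ≤ b q := hq
    have hbs : b (σ s) = s + b (σ 0) := hσbus s hs
    have hbt : b (σ t) = t + b (σ 0) := hσbus t (hs.trans hst)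
    linarith
  refine ⟨le_antisymm ?_ ?_, hdst, hmem⟩
  · exact csInf_le ⟨t - s, hlow⟩ ⟨σ t, hmem, hdst⟩
  · exact le_csInf ⟨_, ⟨σ t, hmem, rfl⟩⟩ hlow
end

section
/- Any two distinct co-rays to γ cannot intersect at interior points: if σ₁ and σ₂ are unit-speed rays with b_γ(σᵢ(s)) = s + b_γ(σᵢ(0)) for all s ≥ 0, and σ₁(s₁) = σ₂(s₂) for some s₁, s₂ > 0, then σ₁(s₁ + u) = σ₂(s₂ + u) for all u ≥ 0. -/
/-- Two co-rays to `γ` cannot cross at interior points: if `σ₁, σ₂` are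
unit-speed rays with `b_γ(σᵢ(s)) = s + b_γ(σᵢ(0))` for all `s ≥ 0`, and `σ₁(s₁) = σ₂(s₂)` for
some `s₁, s₂ > 0`, then `σ₁(s₁ + u) = σ₂(s₂ + u)` for all `u ≥ 0`.  (We assume, as in the
ambient Finsler setting, that interior points of distance-realizing segments to closed sets
admit a unique continuation of the realizing segment.) -/
theorem corays_agree_after_interior_intersection {M : Type*} [TopologicalSpace M]
    (d : M → M → ℝ) (γ : ℝ → M) (b : M → ℝ)
    (hd_self : ∀ p, d p p = 0)
    (htri : ∀ p q r, d p r ≤ d p q + d q r)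
    (hray : ∀ s t : ℝ, 0 ≤ s → s ≤ t → d (γ s) (γ t) = t - s)
    (hb : ∀ x, Filter.Tendsto (fun t => t - d x (γ t)) Filter.atTop (nhds (b x)))
    (hbcont : Continuous b)
    -- unique continuation through interior points of N-segments
    (huniq : ∀ (N : Set M), IsClosed N →
      ∀ (c₁ c₂ : ℝ → M) (a₁ a₂ s₁ s₂ : ℝ),
        (∀ s t : ℝ, 0 ≤ s → s ≤ t → t ≤ a₁ → d (c₁ s) (c₁ t) = t - s) →
        (∀ s t : ℝ, 0 ≤ s → s ≤ t → t ≤ a₂ → d (c₂ s) (c₂ t) = t - s) →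
        (∀ s ∈ Set.Icc (0:ℝ) a₁, sInf ((fun q => d (c₁ s) q) '' N) = a₁ - s) →
        (∀ s ∈ Set.Icc (0:ℝ) a₂, sInf ((fun q => d (c₂ s) q) '' N) = a₂ - s) →
        s₁ ∈ Set.Ioo 0 a₁ → s₂ ∈ Set.Ioo 0 a₂ → c₁ s₁ = c₂ s₂ →
        ∀ u : ℝ, 0 ≤ u → s₁ + u ≤ a₁ → s₂ + u ≤ a₂ → c₁ (s₁ + u) = c₂ (s₂ + u))
    (σ₁ σ₂ : ℝ → M)
    (hσ₁ray : ∀ s t : ℝ, 0 ≤ s → s ≤ t → d (σ₁ s) (σ₁ t) = t - s)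
    (hσ₂ray : ∀ s t : ℝ, 0 ≤ s → s ≤ t → d (σ₂ s) (σ₂ t) = t - s)
    (hσ₁bus : ∀ s : ℝ, 0 ≤ s → b (σ₁ s) = s + b (σ₁ 0))
    (hσ₂bus : ∀ s : ℝ, 0 ≤ s → b (σ₂ s) = s + b (σ₂ 0))
    (s₁ s₂ : ℝ) (hs₁ : 0 < s₁) (hs₂ : 0 < s₂) (hmeet : σ₁ s₁ = σ₂ s₂) :
    ∀ u : ℝ, 0 ≤ u → σ₁ (s₁ + u) = σ₂ (s₂ + u) := by
  -- b is 1-Lipschitz: b y ≤ b x + d x y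
  have hlip : ∀ x y, b y ≤ b x + d x y := by
    intro x y
    have h2 : Filter.Tendsto (fun t => (t - d x (γ t)) + d x y) Filter.atTop
        (nhds (b x + d x y)) := (hb x).add_const _
    refine le_of_tendsto_of_tendsto' (hb y) h2 (fun t => ?_)
    have := htri x y (γ t)
    linarith
  intro u hu
  set c : ℝ := b (σ₁ s₁) + u + 1 with hc
  have hbs₁ : b (σ₁ s₁) = s₁ + b (σ₁ 0) := hσ₁bus s₁ hs₁.le
  have hbs₂ : b (σ₂ s₂) = s₂ + b (σ₂ 0) := hσ₂bus s₂ hs₂.le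
  have hbeq : b (σ₁ s₁) = b (σ₂ s₂) := by rw [hmeet]
  set a₁ : ℝ := c - b (σ₁ 0) with ha₁def
  set a₂ : ℝ := c - b (σ₂ 0) with ha₂def
  have ha₁ : a₁ = s₁ + u + 1 := by rw [ha₂def] at *; rw [ha₁def, hc, hbs₁]; ring
  have ha₂ : a₂ = s₂ + u + 1 := by rw [ha₂def, hc, hbeq, hbs₂]; ring
  set N : Set M := b ⁻¹' Set.Ici c with hNdef
  have hN : IsClosed N := isClosed_Ici.preimage hbcont
  have key : ∀ (σ : ℝ → M), (∀ s t : ℝ, 0 ≤ s → s ≤ t → d (σ s) (σ t) = t - s) →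
      (∀ s : ℝ, 0 ≤ s → b (σ s) = s + b (σ 0)) →
      ∀ a : ℝ, a = c - b (σ 0) →
      ∀ s ∈ Set.Icc (0:ℝ) a, sInf ((fun q => d (σ s) q) '' N) = a - s := by
    intro σ hr hbus a ha s hs
    have ha0 : 0 ≤ a := le_trans hs.1 hs.2
    have hmemN : σ a ∈ N := by
      simp only [hNdef, Set.mem_preimage, Set.mem_Ici]
      rw [hbus a ha0, ha]; linarith
    have hlb : ∀ y ∈ (fun q => d (σ s) q) '' N, a - s ≤ y := by
      rintro y ⟨q, hq, rfl⟩
      have h1 : c ≤ b q := hq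
      have h2 : b q ≤ b (σ s) + d (σ s) q := hlip _ _
      have h3 : b (σ s) = s + b (σ 0) := hbus s hs.1
      have : a = c - b (σ 0) := ha
      linarith
    refine le_antisymm ?_ (le_csInf ⟨_, ⟨σ a, hmemN, rfl⟩⟩ hlb)
    have := hr s a hs.1 hs.2
    calc sInf ((fun q => d (σ s) q) '' N) ≤ d (σ s) (σ a) :=
          csInf_le ⟨a - s, hlb⟩ ⟨σ a, hmemN, rfl⟩
      _ = a - s := this
  exact huniq N hN σ₁ σ₂ a₁ a₂ s₁ s₂
    (fun s t h1 h2 _ => hσ₁ray s t h1 h2)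
    (fun s t h1 h2 _ => hσ₂ray s t h1 h2)
    (key σ₁ hσ₁ray hσ₁bus a₁ ha₁def)
    (key σ₂ hσ₂ray hσ₂bus a₂ ha₂def)
    ⟨hs₁, by linarith⟩ ⟨hs₂, by linarith⟩ hmeet u hu (by linarith) (by linarith)
end

section
/- The cut loci of superlevel sets of a Busemann function are nested: if b < c, then every cut point of N^b_γ = b_γ^{-1}([b, ∞)) is also a cut point of N^c_γ = b_γ^{-1}([c, ∞)). -/
/-- `α : [0,a] → M` is an `N`-segment: a unit-speed minimizing geodesic with
`d(α(t), N) = a − t` on `[0, a]`. -/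
def IsNSegment {M : Type*} (d : M → M → ℝ) (N : Set M) (α : ℝ → M) (a : ℝ) : Prop :=
  0 < a ∧ (∀ s t : ℝ, 0 ≤ s → s ≤ t → t ≤ a → d (α s) (α t) = t - s) ∧
    ∀ t ∈ Set.Icc (0:ℝ) a, sInf ((fun q => d (α t) q) '' N) = a - t

/-- `x` is a cut point of `N`: some `N`-segment starting at `x` admits no extension to
`[−ε, a]` which is still an `N`-segment. -/
def IsCutPointOf {M : Type*} (d : M → M → ℝ) (N : Set M) (x : M) : Prop :=
  ∃ (α : ℝ → M) (a : ℝ), α 0 = x ∧ IsNSegment d N α a ∧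
    ¬ ∃ ε > (0:ℝ), ∃ β : ℝ → M, (∀ t ∈ Set.Icc (0:ℝ) a, β t = α t) ∧
      (∀ s t : ℝ, -ε ≤ s → s ≤ t → t ≤ a → d (β s) (β t) = t - s) ∧
      (∀ t ∈ Set.Icc (-ε) a, sInf ((fun q => d (β t) q) '' N) = a - t)

/-- The cut loci of superlevel sets of a Busemann function are nested:
if `b < c`, then every cut point of `N^b_γ = b_γ⁻¹([b, ∞))` is a cut point of
`N^c_γ = b_γ⁻¹([c, ∞))`. -/
theorem cut_loci_of_superlevels_nested {M : Type*} (d : M → M → ℝ) (γ : ℝ → M) (bus : M → ℝ)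
    (hd_self : ∀ p, d p p = 0)
    (htri : ∀ p q r, d p r ≤ d p q + d q r)
    (hray : ∀ s t : ℝ, 0 ≤ s → s ≤ t → d (γ s) (γ t) = t - s)
    (hb : ∀ x, Filter.Tendsto (fun t => t - d x (γ t)) Filter.atTop (nhds (bus x)))
    (hlip : ∀ x y : M, bus x - bus y ≤ d y x)
    -- every point admits a co-ray to γ
    (hco : ∀ x : M, ∃ σ : ℝ → M, σ 0 = x ∧
      (∀ s t : ℝ, 0 ≤ s → s ≤ t → d (σ s) (σ t) = t - s) ∧
      (∀ s : ℝ, 0 ≤ s → bus (σ s) = s + bus x))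
    (b c : ℝ) (hbc : b < c) :
    ∀ x : M, IsCutPointOf d {q : M | b ≤ bus q} x → IsCutPointOf d {q : M | c ≤ bus q} x := by
  intro x hx
  obtain ⟨α, a, hα0, ⟨hapos, hgeo, hinf⟩, hnoext⟩ := hx
  -- lower bound for distance to a superlevel set
  have key_ge : ∀ (y : M) (v : ℝ),
      v - bus y ≤ sInf ((fun q => d y q) '' {q | v ≤ bus q}) := by
    intro y v
    obtain ⟨σ, hσ0, hσg, hσb⟩ := hco y
    have h0 : (0:ℝ) ≤ max (v - bus y) 0 := le_max_right _ _
    have hmem : σ (max (v - bus y) 0) ∈ {q | v ≤ bus q} := by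
      have h1 := hσb _ h0
      have h2 := le_max_left (v - bus y) 0
      simp only [Set.mem_setOf_eq, h1]
      linarith
    refine le_csInf ⟨_, ⟨_, hmem, rfl⟩⟩ ?_
    rintro z ⟨q, hq, rfl⟩
    have := hlip q y
    simp only [Set.mem_setOf_eq] at hq
    simp only []
    linarith
  -- upper bound for distance to a superlevel set
  have key_le : ∀ (y : M) (v : ℝ),
      sInf ((fun q => d y q) '' {q | v ≤ bus q}) ≤ max (v - bus y) 0 := by
    intro y v
    obtain ⟨σ, hσ0, hσg, hσb⟩ := hco y
    have h0 : (0:ℝ) ≤ max (v - bus y) 0 := le_max_right _ _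
    have hmem : σ (max (v - bus y) 0) ∈ {q | v ≤ bus q} := by
      have h1 := hσb _ h0
      have h2 := le_max_left (v - bus y) 0
      simp only [Set.mem_setOf_eq, h1]
      linarith
    have hdist : d y (σ (max (v - bus y) 0)) = max (v - bus y) 0 := by
      have := hσg 0 _ le_rfl h0
      rw [hσ0] at this
      simpa using this
    have hbdd : BddBelow ((fun q => d y q) '' {q | v ≤ bus q}) := by
      refine ⟨v - bus y, ?_⟩
      rintro z ⟨q, hq, rfl⟩
      have := hlip q y
      simp only [Set.mem_setOf_eq] at hq
      simp only []
      linarith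
    calc sInf ((fun q => d y q) '' {q | v ≤ bus q}) ≤ d y (σ (max (v - bus y) 0)) :=
          csInf_le hbdd ⟨_, hmem, rfl⟩
      _ = max (v - bus y) 0 := hdist
  -- Busemann function along the N^b-segment α
  have hbuslt : ∀ t, 0 ≤ t → t < a → bus (α t) = b - a + t := by
    intro t ht hta
    have h1 := key_ge (α t) b
    have h2 := key_le (α t) b
    rw [hinf t ⟨ht, hta.le⟩] at h1 h2
    have hpos : 0 < a - t := by linarith
    rcases le_max_iff.mp h2 with h | h
    · linarith
    · linarith
  have hbusα : ∀ t, 0 ≤ t → t ≤ a → bus (α t) = b - a + t := by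
    intro t ht hta
    rcases lt_or_eq_of_le hta with h | h
    · exact hbuslt t ht h
    · rw [h]
      have h0 : bus (α 0) = b - a := by simpa using hbuslt 0 le_rfl hapos
      have h1 := key_ge (α a) b
      rw [hinf a ⟨hapos.le, le_rfl⟩] at h1
      have h2 := hlip (α a) (α 0)
      rw [hgeo 0 a le_rfl hapos.le le_rfl, h0] at h2
      linarith
  have hbusa : bus (α a) = b := by
    have := hbusα a hapos.le le_rfl
    linarith
  obtain ⟨σ, hσ0, hσg, hσb⟩ := hco (α a)
  set a' : ℝ := a + (c - b) with ha'
  set β : ℝ → M := fun t => if t ≤ a then α t else σ (t - a) with hβ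
  have hβle : ∀ t, t ≤ a → β t = α t := fun t ht => if_pos ht
  have hβge : ∀ t, a ≤ t → β t = σ (t - a) := by
    intro t ht
    rcases eq_or_lt_of_le ht with h | h
    · rw [← h]
      simp [hβ, hσ0]
    · exact if_neg (not_le.mpr h)
  have hβbus : ∀ t, 0 ≤ t → t ≤ a' → bus (β t) = c - a' + t := by
    intro t ht hta
    rcases le_or_gt t a with h | h
    · rw [hβle t h, hbusα t ht h, ha']
      ring
    · rw [hβge t h.le, hσb (t - a) (by linarith), hbusa, ha']
      ring
  have hβgeo : ∀ s t : ℝ, 0 ≤ s → s ≤ t → t ≤ a' → d (β s) (β t) = t - s := by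
    intro s t hs hst hta
    rcases le_or_gt t a with h | h
    · rw [hβle s (hst.trans h), hβle t h]
      exact hgeo s t hs hst h
    · rcases le_or_gt a s with hs' | hs'
      · rw [hβge s hs', hβge t h.le,
          show t - s = (t - a) - (s - a) by ring]
        exact hσg (s - a) (t - a) (by linarith) (by linarith)
      · have h1 : d (β s) (β a) = a - s := by
          rw [hβle s hs'.le, hβle a le_rfl]
          exact hgeo s a hs hs'.le le_rfl
        have h2 : d (β a) (β t) = t - a := by
          rw [hβge a le_rfl, hβge t h.le, sub_self]
          have := hσg 0 (t - a) le_rfl (by linarith)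
          simpa using this
        have hup := htri (β s) (β a) (β t)
        have hlo := hlip (β t) (β s)
        rw [hβbus s hs (by linarith), hβbus t (by linarith) hta] at hlo
        linarith
  have hβinf : ∀ t ∈ Set.Icc (0:ℝ) a',
      sInf ((fun q => d (β t) q) '' {q | c ≤ bus q}) = a' - t := by
    rintro t ⟨ht, hta⟩
    have h1 := key_ge (β t) c
    have h2 := key_le (β t) c
    rw [hβbus t ht hta] at h1 h2
    have hm : max (c - (c - a' + t)) 0 = a' - t := by
      rw [max_eq_left (by linarith)]
      ring
    rw [hm] at h2
    have he : c - (c - a' + t) = a' - t := by ring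
    rw [he] at h1
    linarith
  refine ⟨β, a', ?_, ⟨by linarith, hβgeo, hβinf⟩, ?_⟩
  · rw [hβle 0 hapos.le]
    exact hα0
  · rintro ⟨ε, hε, β', hagree, hgeo', hinf'⟩
    apply hnoext
    have haa' : a ≤ a' := by linarith
    have hbus' : ∀ t, -ε ≤ t → t ≤ a → bus (β' t) = b - a + t := by
      intro t ht hta
      have h1 := key_ge (β' t) c
      have h2 := key_le (β' t) c
      rw [hinf' t ⟨ht, hta.trans haa'⟩] at h1 h2
      have hpos : 0 < a' - t := by linarith
      rcases le_max_iff.mp h2 with h | h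
      · linarith
      · linarith
    refine ⟨ε, hε, β', ?_, ?_, ?_⟩
    · rintro t ⟨ht, hta⟩
      rw [hagree t ⟨ht, hta.trans haa'⟩, hβle t hta]
    · intro s t hs hst hta
      exact hgeo' s t hs hst (hta.trans haa')
    · rintro t ⟨ht, hta⟩
      have h1 := key_ge (β' t) b
      have h2 := key_le (β' t) b
      rw [hbus' t ht hta] at h1 h2
      have hm : max (b - (b - a + t)) 0 = a - t := by
        rw [max_eq_left (by linarith)]
        ring
      rw [hm] at h2
      have he : b - (b - a + t) = a - t := by ring
      rw [he] at h1
      linarith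
end

section
/- If x is a point of M with b_γ(x) < c, then x is a cut point of γ (origin of a maximal co-ray to γ) if and only if x is a cut point of the superlevel set N^c_γ = b_γ^{-1}([c, ∞)); that is, 𝒞_γ ∩ b_γ^{-1}((−∞, c)) = 𝒞_{N^c_γ}. -/
/-- `σ` is a co-ray to `γ` (for the Busemann function `bus`): a unit-speed ray along which
`bus` increases at unit rate. -/
def IsCoray {M : Type*} (d : M → M → ℝ) (bus : M → ℝ) (σ : ℝ → M) : Prop :=
  (∀ s t : ℝ, 0 ≤ s → s ≤ t → d (σ s) (σ t) = t - s) ∧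
    ∀ s : ℝ, 0 ≤ s → bus (σ s) = s + bus (σ 0)

/-- `x` is a co-point of `γ`: the origin of a maximal co-ray, i.e., a co-ray from `x` which is
not the `ε`-shift of any longer co-ray. -/
def IsCopoint {M : Type*} (d : M → M → ℝ) (bus : M → ℝ) (x : M) : Prop :=
  ∃ σ : ℝ → M, IsCoray d bus σ ∧ σ 0 = x ∧
    ¬ ∃ ε > (0:ℝ), ∃ τ : ℝ → M, IsCoray d bus τ ∧ ∀ s : ℝ, 0 ≤ s → τ (s + ε) = σ s

/-- For `b_γ(x) < c`, the point `x` is a co-point of `γ` (origin of a maximal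
co-ray) if and only if `x` is a cut point of the superlevel set `N^c_γ = b_γ⁻¹([c, ∞))`;
that is, `𝒞_γ ∩ b_γ⁻¹((−∞, c)) = 𝒞_{N^c_γ}`. -/
theorem copoints_eq_cut_locus_of_superlevel {M : Type*} (d : M → M → ℝ) (γ : ℝ → M)
    (bus : M → ℝ)
    (hd_self : ∀ p, d p p = 0)
    (htri : ∀ p q r, d p r ≤ d p q + d q r)
    (hray : ∀ s t : ℝ, 0 ≤ s → s ≤ t → d (γ s) (γ t) = t - s)
    (hb : ∀ x, Filter.Tendsto (fun t => t - d x (γ t)) Filter.atTop (nhds (bus x)))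
    (hlip : ∀ x y : M, bus x - bus y ≤ d y x)
    (hco : ∀ x : M, ∃ σ : ℝ → M, IsCoray d bus σ ∧ σ 0 = x)
    (c : ℝ) :
    {x : M | IsCopoint d bus x} ∩ {x : M | bus x < c} =
      {x : M | IsCutPointOf d {q : M | c ≤ bus q} x} := by
  classical
  ext x
  simp only [Set.mem_inter_iff, Set.mem_setOf_eq]
  -- basic facts about N = {q | c ≤ bus q}
  have hNne : ∃ q : M, c ≤ bus q := by
    obtain ⟨σ, ⟨hr, hbσ⟩, h0⟩ := hco x
    refine ⟨σ (max 0 (c - bus x)), ?_⟩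
    have h1 := hbσ (max 0 (c - bus x)) (le_max_left _ _)
    have h2 : c - bus x ≤ max 0 (c - bus x) := le_max_right _ _
    rw [h1, h0]; linarith
  have hbdd : ∀ y : M, BddBelow ((fun q => d y q) '' {q : M | c ≤ bus q}) := by
    intro y
    refine ⟨c - bus y, ?_⟩
    rintro r ⟨q, hq, rfl⟩
    have h1 := hlip q y
    simp only [Set.mem_setOf_eq] at hq
    simp only []
    linarith
  have hne : ∀ y : M, ((fun q => d y q) '' {q : M | c ≤ bus q}).Nonempty := by
    intro y
    obtain ⟨q, hq⟩ := hNne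
    exact ⟨d y q, ⟨q, hq, rfl⟩⟩
  have hinf_ge : ∀ y : M, c - bus y ≤ sInf ((fun q => d y q) '' {q : M | c ≤ bus q}) := by
    intro y
    apply le_csInf (hne y)
    rintro r ⟨q, hq, rfl⟩
    have h1 := hlip q y
    simp only [Set.mem_setOf_eq] at hq
    simp only []
    linarith
  have hmem_le : ∀ y : M, c ≤ bus y →
      sInf ((fun q => d y q) '' {q : M | c ≤ bus q}) ≤ 0 := by
    intro y hy
    calc sInf ((fun q => d y q) '' {q : M | c ≤ bus q}) ≤ d y y :=
          csInf_le (hbdd y) ⟨y, hy, rfl⟩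
      _ = 0 := hd_self y
  have hinf_eq : ∀ y : M, bus y ≤ c →
      sInf ((fun q => d y q) '' {q : M | c ≤ bus q}) = c - bus y := by
    intro y hy
    obtain ⟨σ, ⟨hr, hbσ⟩, h0⟩ := hco y
    refine le_antisymm ?_ (hinf_ge y)
    have hmem : σ (c - bus y) ∈ {q : M | c ≤ bus q} := by
      have h1 := hbσ (c - bus y) (by linarith)
      simp only [Set.mem_setOf_eq]
      rw [h1, h0]; linarith
    have hd1 : d y (σ (c - bus y)) = c - bus y := by
      have h1 := hr 0 (c - bus y) le_rfl (by linarith)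
      rw [h0] at h1; linarith
    calc sInf ((fun q => d y q) '' {q : M | c ≤ bus q}) ≤ d y (σ (c - bus y)) :=
          csInf_le (hbdd y) ⟨_, hmem, rfl⟩
      _ = c - bus y := hd1
  have hbus_small : ∀ y : M, ∀ r : ℝ, 0 < r →
      sInf ((fun q => d y q) '' {q : M | c ≤ bus q}) = r → bus y = c - r := by
    intro y r hr hinf
    have hyc : bus y ≤ c := by
      by_contra h
      have h1 := hmem_le y (le_of_lt (not_le.mp h))
      linarith
    have h2 := hinf_eq y hyc
    linarith
  constructor
  · -- copoint with bus x < c → cut point of N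
    rintro ⟨⟨σ, ⟨hσd, hσb⟩, hσ0, hσmax⟩, hxc⟩
    have ha : (0:ℝ) < c - bus x := by linarith
    refine ⟨σ, c - bus x, hσ0, ⟨ha, fun s t hs hst _ => hσd s t hs hst, ?_⟩, ?_⟩
    · intro t ht
      have hbt : bus (σ t) = bus x + t := by
        have h1 := hσb t ht.1; rw [h1, hσ0]; ring
      have h2 : bus (σ t) ≤ c := by rw [hbt]; have := ht.2; linarith
      rw [hinf_eq _ h2, hbt]; ring
    · rintro ⟨ε, hε, β, hβeq, hβd, hβinf⟩
      apply hσmax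
      set a : ℝ := c - bus x with ha_def
      have hβbus : ∀ t : ℝ, -ε ≤ t → t ≤ 0 → bus (β t) = bus x + t := by
        intro t ht1 ht2
        have h1 := hβinf t ⟨ht1, by linarith⟩
        have h2 := hbus_small (β t) (a - t) (by linarith) h1
        rw [h2]; simp only [ha_def]; ring
      have hβ0 : β 0 = σ 0 := hβeq 0 ⟨le_rfl, ha.le⟩
      refine ⟨ε, hε, fun s => if s < ε then β (s - ε) else σ (s - ε), ⟨?_, ?_⟩, ?_⟩
      · -- distance property of τ
        intro s t hs hst
        rcases lt_or_ge s ε with hsε | hsε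
        · rcases lt_or_ge t ε with htε | htε
          · simp only [if_pos hsε, if_pos htε]
            have h1 := hβd (s - ε) (t - ε) (by linarith) (by linarith) (by linarith)
            rw [h1]; ring
          · simp only [if_pos hsε, if_neg (not_lt.mpr htε)]
            have h1 : d (β (s - ε)) (β 0) = ε - s := by
              have h2 := hβd (s - ε) 0 (by linarith) (by linarith) (by linarith)
              rw [h2]; ring
            have h2 : d (σ 0) (σ (t - ε)) = t - ε := by
              have h3 := hσd 0 (t - ε) le_rfl (by linarith)
              rw [h3]; ring
            have h3 := htri (β (s - ε)) (σ 0) (σ (t - ε))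
            rw [hβ0] at h1
            have h4 := hlip (σ (t - ε)) (β (s - ε))
            have h5 : bus (σ (t - ε)) = bus x + (t - ε) := by
              have := hσb (t - ε) (by linarith); rw [this, hσ0]; ring
            have h6 : bus (β (s - ε)) = bus x + (s - ε) :=
              hβbus (s - ε) (by linarith) (by linarith)
            rw [h5, h6] at h4
            linarith
        · have htε : ¬ t < ε := not_lt.mpr (by linarith)
          simp only [if_neg (not_lt.mpr hsε), if_neg htε]
          have h1 := hσd (s - ε) (t - ε) (by linarith) (by linarith)
          rw [h1]; ring
      · -- bus property of τ
        intro s hs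
        have hτ0 : bus (if (0:ℝ) < ε then β (0 - ε) else σ (0 - ε)) = bus x - ε := by
          rw [if_pos hε]
          have := hβbus (0 - ε) (by linarith) (by linarith)
          rw [this]; ring
        rcases lt_or_ge s ε with hsε | hsε
        · simp only [if_pos hsε, hτ0]
          have := hβbus (s - ε) (by linarith) (by linarith)
          rw [this]; ring
        · simp only [if_neg (not_lt.mpr hsε), hτ0]
          have := hσb (s - ε) (by linarith)
          rw [this, hσ0]; ring
      · -- shift property
        intro s hs
        have h1 : ¬ s + ε < ε := by linarith
        simp only [if_neg h1]
        congr 1; ring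
  · -- cut point of N → copoint with bus x < c
    rintro ⟨α, a, hα0, ⟨ha, hαd, hαinf⟩, hαmax⟩
    have hxltc : bus x < c := by
      by_contra h
      have h1 := hmem_le x (not_lt.mp h)
      have h2 := hαinf 0 ⟨le_rfl, ha.le⟩
      rw [hα0] at h2
      simp only [sub_zero] at h2
      linarith
    have hac : a = c - bus x := by
      have h2 := hαinf 0 ⟨le_rfl, ha.le⟩
      rw [hα0] at h2
      have h3 := hinf_eq x hxltc.le
      simp only [sub_zero] at h2
      linarith
    have busα : ∀ t ∈ Set.Icc (0:ℝ) a, bus (α t) = bus x + t := by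
      intro t ht
      have h1 : c - bus (α t) ≤ a - t := by
        rw [← hαinf t ht]; exact hinf_ge _
      have hd1 : d x (α t) = t := by
        have h2 := hαd 0 t le_rfl ht.1 ht.2
        rw [hα0] at h2; linarith
      have h2 := hlip (α t) x
      rw [hd1] at h2
      linarith
    obtain ⟨σ', ⟨hσ'd, hσ'b⟩, hσ'0⟩ := hco (α a)
    have hbusαa : bus (α a) = c := by
      have := busα a ⟨ha.le, le_rfl⟩; rw [this, hac]; ring
    set σ : ℝ → M := fun s => if s < a then α s else σ' (s - a) with hσdef
    have hσeqα : ∀ t ∈ Set.Icc (0:ℝ) a, σ t = α t := by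
      intro t ht
      by_cases h : t < a
      · simp only [hσdef, if_pos h]
      · have ht' : t = a := le_antisymm ht.2 (not_lt.mp h)
        simp only [hσdef, if_neg h, ht', sub_self, hσ'0, ite_self]
    have busσ : ∀ s : ℝ, 0 ≤ s → bus (σ s) = bus x + s := by
      intro s hs
      by_cases h : s < a
      · simp only [hσdef, if_pos h]
        exact busα s ⟨hs, h.le⟩
      · simp only [hσdef, if_neg h]
        have h1 := hσ'b (s - a) (by linarith [not_lt.mp h])
        rw [h1, hσ'0, hbusαa]; linarith [hac]
    have dσ : ∀ s t : ℝ, 0 ≤ s → s ≤ t → d (σ s) (σ t) = t - s := by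
      intro s t hs hst
      rcases lt_or_ge t a with hta | hta
      · have hsa : s < a := lt_of_le_of_lt hst hta
        simp only [hσdef, if_pos hta, if_pos hsa]
        exact hαd s t hs hst hta.le
      · rcases lt_or_ge s a with hsa | hsa
        · have h1 : d (σ s) (α a) = a - s := by
            simp only [hσdef, if_pos hsa]
            exact hαd s a hs hsa.le le_rfl
          have h2 : d (α a) (σ t) = t - a := by
            simp only [hσdef, if_neg (not_lt.mpr hta)]
            have h3 := hσ'd 0 (t - a) le_rfl (by linarith)
            rw [hσ'0] at h3; rw [h3]; ring
          have h3 := htri (σ s) (α a) (σ t)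
          have h4 := hlip (σ t) (σ s)
          rw [busσ t (by linarith), busσ s hs] at h4
          linarith
        · simp only [hσdef, if_neg (not_lt.mpr hsa), if_neg (not_lt.mpr hta)]
          have h1 := hσ'd (s - a) (t - a) (by linarith) (by linarith)
          rw [h1]; ring
    refine ⟨⟨σ, ⟨dσ, fun s hs => by rw [busσ s hs, busσ 0 le_rfl]; ring⟩,
      by rw [hσeqα 0 ⟨le_rfl, ha.le⟩, hα0], ?_⟩, hxltc⟩
    rintro ⟨ε, hε, τ, ⟨hτd, hτb⟩, hshift⟩
    apply hαmax
    have hτ0 : bus (τ 0) = bus x - ε := by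
      have h1 := hτb ε hε.le
      have h2 : τ (0 + ε) = σ 0 := hshift 0 le_rfl
      rw [zero_add] at h2
      rw [h2, busσ 0 le_rfl] at h1
      linarith
    refine ⟨ε, hε, fun t => τ (t + ε), ?_, ?_, ?_⟩
    · intro t ht
      have h1 := hshift t ht.1
      simp only [h1]
      exact hσeqα t ht
    · intro s t hs hst hta
      have h1 := hτd (s + ε) (t + ε) (by linarith) (by linarith)
      simp only [h1]; ring
    · intro t ht
      have hbusβ : bus (τ (t + ε)) = bus x + t := by
        rw [hτb (t + ε) (by linarith [ht.1]), hτ0]; ring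
      apply le_antisymm
      · have hw : τ (a + ε) = σ a := hshift a ha.le
        have hwN : σ a ∈ {q : M | c ≤ bus q} := by
          simp only [Set.mem_setOf_eq, busσ a ha.le]; linarith [hac]
        have hdw : d (τ (t + ε)) (σ a) = a - t := by
          rw [← hw]
          have h1 := hτd (t + ε) (a + ε) (by linarith [ht.1]) (by linarith [ht.2])
          rw [h1]; ring
        calc sInf ((fun q => d (τ (t + ε)) q) '' {q : M | c ≤ bus q})
            ≤ d (τ (t + ε)) (σ a) := csInf_le (hbdd _) ⟨σ a, hwN, rfl⟩
          _ = a - t := hdw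
      · have h1 := hinf_ge (τ (t + ε))
        rw [hbusβ] at h1
        have : c - (bus x + t) = a - t := by rw [hac]; ring
        linarith
end

section
/- If x is an interior point of a co-ray σ to γ, i.e., x = σ(t₀) with t₀ > 0, then the Busemann function b_γ is differentiable at x, with gradient equal to σ'(t₀). -/
/-- If `x = σ(t₀)`, `t₀ > 0`, is an interior point of a co-ray `σ` to `γ`,
then `b_γ` is differentiable at `x` and its gradient is `σ'(t₀)`; metrically, the unique
co-ray emanating from `x` is the subray `u ↦ σ(t₀ + u)`.  (Differentiability is
characterized by uniqueness of the emanating co-ray; interior points of distance-realizing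
segments to closed sets admit unique continuation.) -/
theorem busemann_differentiable_at_interior_of_coray {M : Type*} [TopologicalSpace M]
    (d : M → M → ℝ) (γ : ℝ → M) (bus : M → ℝ) (Diff : M → Prop)
    (hd_self : ∀ p, d p p = 0)
    (htri : ∀ p q r, d p r ≤ d p q + d q r)
    (hray : ∀ s t : ℝ, 0 ≤ s → s ≤ t → d (γ s) (γ t) = t - s)
    (hb : ∀ x, Filter.Tendsto (fun t => t - d x (γ t)) Filter.atTop (nhds (bus x)))
    (hbcont : Continuous bus)
    (hdiff : ∀ x : M, Diff x ↔
      (∃ σ : ℝ → M, IsCoray d bus σ ∧ σ 0 = x) ∧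
      (∀ σ τ : ℝ → M, IsCoray d bus σ → IsCoray d bus τ → σ 0 = x → τ 0 = x →
        ∀ s : ℝ, 0 ≤ s → σ s = τ s))
    -- unique continuation through interior points of N-segments
    (huniq : ∀ (N : Set M), IsClosed N →
      ∀ (c₁ c₂ : ℝ → M) (a₁ a₂ s₁ s₂ : ℝ),
        (∀ s t : ℝ, 0 ≤ s → s ≤ t → t ≤ a₁ → d (c₁ s) (c₁ t) = t - s) →
        (∀ s t : ℝ, 0 ≤ s → s ≤ t → t ≤ a₂ → d (c₂ s) (c₂ t) = t - s) →
        (∀ s ∈ Set.Icc (0:ℝ) a₁, sInf ((fun q => d (c₁ s) q) '' N) = a₁ - s) →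
        (∀ s ∈ Set.Icc (0:ℝ) a₂, sInf ((fun q => d (c₂ s) q) '' N) = a₂ - s) →
        s₁ ∈ Set.Ioo 0 a₁ → s₂ ∈ Set.Ioo 0 a₂ → c₁ s₁ = c₂ s₂ →
        ∀ u : ℝ, 0 ≤ u → s₁ + u ≤ a₁ → s₂ + u ≤ a₂ → c₁ (s₁ + u) = c₂ (s₂ + u))
    (σ : ℝ → M) (t₀ : ℝ) (hσ : IsCoray d bus σ) (ht₀ : 0 < t₀) :
    Diff (σ t₀) ∧
    ∀ τ : ℝ → M, IsCoray d bus τ → τ 0 = σ t₀ → ∀ u : ℝ, 0 ≤ u → τ u = σ (t₀ + u) := by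
  obtain ⟨hσd, hσb⟩ := hσ
  -- Lipschitz-type bound for the Busemann function
  have hlip : ∀ x q : M, bus q ≤ bus x + d x q := by
    intro x q
    refine le_of_tendsto_of_tendsto' (hb q) ((hb x).add_const (d x q)) ?_
    intro t
    have := htri x q (γ t)
    linarith
  have key : ∀ τ : ℝ → M, IsCoray d bus τ → τ 0 = σ t₀ →
      ∀ u : ℝ, 0 ≤ u → τ u = σ (t₀ + u) := by
    intro τ hτ hτ0 u hu
    obtain ⟨hτd, hτb⟩ := hτ
    set a := t₀ + u + 1 with ha
    set B := a + bus (σ 0) with hB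
    set N : Set M := {q | B ≤ bus q} with hN
    have hNclosed : IsClosed N := isClosed_le continuous_const hbcont
    have hbusτ : bus (τ 0) = t₀ + bus (σ 0) := by rw [hτ0]; exact hσb t₀ ht₀.le
    set c₂ : ℝ → M := fun s => if s ≤ t₀ then σ s else τ (s - t₀) with hc₂
    have hbusc₂ : ∀ s : ℝ, 0 ≤ s → bus (c₂ s) = s + bus (σ 0) := by
      intro s hs
      by_cases h : s ≤ t₀
      · simp only [hc₂, if_pos h]; exact hσb s hs
      · simp only [hc₂, if_neg h]
        rw [hτb (s - t₀) (by push_neg at h; linarith), hbusτ]; ring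
    have hc₂seg : ∀ s t : ℝ, 0 ≤ s → s ≤ t → t ≤ a → d (c₂ s) (c₂ t) = t - s := by
      intro s t hs hst hta
      by_cases h1 : t ≤ t₀
      · have h2 : s ≤ t₀ := le_trans hst h1
        simp only [hc₂, if_pos h1, if_pos h2]; exact hσd s t hs hst
      · push_neg at h1
        by_cases h2 : s ≤ t₀
        · simp only [hc₂, if_pos h2, if_neg (not_le.mpr h1)]
          have hle : d (σ s) (τ (t - t₀)) ≤ t - s := by
            have h3 := htri (σ s) (σ t₀) (τ (t - t₀))
            have h4 : d (σ s) (σ t₀) = t₀ - s := hσd s t₀ hs h2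
            have h5 : d (τ 0) (τ (t - t₀)) = (t - t₀) - 0 :=
              hτd 0 (t - t₀) le_rfl (by linarith)
            rw [hτ0] at h5
            linarith
          have hge : t - s ≤ d (σ s) (τ (t - t₀)) := by
            have h0 := hlip (σ s) (τ (t - t₀))
            have h6 : bus (τ (t - t₀)) = (t - t₀) + bus (τ 0) := hτb _ (by linarith)
            have h7 : bus (σ s) = s + bus (σ 0) := hσb s hs
            rw [hbusτ] at h6
            linarith
          linarith
        · push_neg at h2
          simp only [hc₂, if_neg (not_le.mpr h1), if_neg (not_le.mpr h2)]
          have := hτd (s - t₀) (t - t₀) (by linarith) (by linarith)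
          linarith
    have hσseg : ∀ s t : ℝ, 0 ≤ s → s ≤ t → t ≤ a → d (σ s) (σ t) = t - s :=
      fun s t hs hst _ => hσd s t hs hst
    have hinN : ∀ (c : ℝ → M),
        (∀ s : ℝ, 0 ≤ s → bus (c s) = s + bus (σ 0)) →
        (∀ s t : ℝ, 0 ≤ s → s ≤ t → t ≤ a → d (c s) (c t) = t - s) →
        ∀ s ∈ Set.Icc (0:ℝ) a, sInf ((fun q => d (c s) q) '' N) = a - s := by
      intro c hbc hcseg s hs
      have ha0 : (0:ℝ) ≤ a := by simp only [ha]; linarith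
      have hmem : c a ∈ N := by
        simp only [hN, Set.mem_setOf_eq, hbc a ha0, hB, le_refl]
      have hval : d (c s) (c a) = a - s := hcseg s a hs.1 hs.2 le_rfl
      have hbc' := hbc s hs.1
      apply le_antisymm
      · have hbdd : BddBelow ((fun q => d (c s) q) '' N) := by
          refine ⟨a - s, ?_⟩
          rintro x ⟨q, hq, rfl⟩
          have h1 := hlip (c s) q
          have h2 : B ≤ bus q := hq
          simp only [hB] at h2
          linarith
        exact csInf_le hbdd ⟨c a, hmem, hval⟩
      · have hne : ((fun q => d (c s) q) '' N).Nonempty := ⟨d (c s) (c a), c a, hmem, rfl⟩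
        apply le_csInf hne
        rintro x ⟨q, hq, rfl⟩
        have h1 := hlip (c s) q
        have h2 : B ≤ bus q := hq
        simp only [hB] at h2
        linarith
    have main := huniq N hNclosed σ c₂ a a t₀ t₀ hσseg hc₂seg
      (hinN σ hσb hσseg) (hinN c₂ hbusc₂ hc₂seg)
      ⟨ht₀, by simp only [ha]; linarith⟩ ⟨ht₀, by simp only [ha]; linarith⟩
      (by simp [hc₂]) u hu (by simp only [ha]; linarith) (by simp only [ha]; linarith)
    rw [main]
    rcases eq_or_lt_of_le hu with h | h
    · simp only [hc₂, ← h, add_zero, le_refl, if_pos, hτ0]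
    · simp only [hc₂, if_neg (not_le.mpr (by linarith : t₀ < t₀ + u))]
      congr 1; ring
  refine ⟨?_, key⟩
  rw [hdiff]
  refine ⟨⟨fun u => σ (t₀ + u), ⟨?_, ?_⟩, by simp⟩, ?_⟩
  · intro s t hs hst
    have := hσd (t₀ + s) (t₀ + t) (by linarith) (by linarith)
    linarith
  · intro s hs
    have h1 := hσb (t₀ + s) (by linarith)
    have h2 := hσb (t₀ + 0) (by linarith)
    rw [h1, h2]; ring
  · intro σ₁ τ₁ h1 h2 hx1 hx2 s hs
    rw [key σ₁ h1 hx1 s hs, key τ₁ h2 hx2 s hs]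
end
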